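/- arXiv:1103.3680 — 2 statements merged into one kernel-verified Lean document; each statement's English description precedes it below -/
import Mathlib

section
/- Let (X,≤) be a partially ordered set and p a partial metric on X making (X,p) complete. Let f : X → X be monotone non-decreasing such that p(fx,fy) ≤ p(x,y) - ψ(p(x,y)) whenever y ≤ x, where ψ : [0,∞) → [0,∞) is continuous, non-decreasing, positive on (0,∞), ψ(0) = 0, and ψ(t) → ∞ as t → ∞. If there exists x_0 with x_0 ≤ f(x_0) and f is continuous in (X,p), then f has a fixed point u ∈ X with p(u,u) = 0. -/
/-!
The Picard iterates `uₙ = fⁿ x₀` form a monotone sequence, so the contraction condition applies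
to every pair of them: `p(uₙ₊₁, uₘ₊₁) ≤ p(uₙ, uₘ) - ψ(p(uₙ, uₘ))`. Since `ψ → ∞`, this keeps all
`p(uₙ, uₘ)` bounded by some `B`, and then for every `ε > 0` one step of the recursion lowers the
bound on the `j`-th tail from `T` to `max ε (T - ψ ε)`; hence `p(uₙ, uₘ) → 0`. Completeness gives
a limit `x` with `p(x, x) = 0`, and continuity of `f` for proper convergence yields
`p(x, f x) = 0`, i.e. `f x = x`.
-/

noncomputable section
open Filter Topology

def IsPartialMetric {X : Type*} (p : X → X → ℝ) : Prop :=
  (∀ x y, 0 ≤ p x y) ∧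
  (∀ x y, x = y ↔ (p x x = p x y ∧ p x y = p y y)) ∧
  (∀ x y, p x x ≤ p x y) ∧
  (∀ x y, p x y = p y x) ∧
  (∀ x y z, p x y ≤ p x z + p z y - p z z)

/-- `u` converges to `x` in the partial metric space `(X, p)`. -/
def PConvergesTo {X : Type*} (p : X → X → ℝ) (u : ℕ → X) (x : X) : Prop :=
  Tendsto (fun n => p (u n) x) atTop (𝓝 (p x x))

/-- `u` converges properly to `x` in `(X, p)`. -/
def PProperConvergesTo {X : Type*} (p : X → X → ℝ) (u : ℕ → X) (x : X) : Prop :=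
  Tendsto (fun n => p (u n) x) atTop (𝓝 (p x x)) ∧
  Tendsto (fun n => p (u n) (u n)) atTop (𝓝 (p x x))

/-- `u` is a Cauchy sequence in `(X, p)`: `lim_{n,m} p (u n) (u m)` exists (finite). -/
def PCauchy {X : Type*} (p : X → X → ℝ) (u : ℕ → X) : Prop :=
  ∃ l : ℝ, Tendsto (fun nm : ℕ × ℕ => p (u nm.1) (u nm.2)) atTop (𝓝 l)

/-- `(X, p)` is a complete partial metric space. -/
def PComplete {X : Type*} (p : X → X → ℝ) : Prop :=
  ∀ u : ℕ → X, ∀ l : ℝ,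
    Tendsto (fun nm : ℕ × ℕ => p (u nm.1) (u nm.2)) atTop (𝓝 l) →
    ∃ x, p x x = l ∧ Tendsto (fun n => p (u n) x) atTop (𝓝 l)

/-- `f` is continuous on `(X, p)` (w.r.t. both `p` and the induced metric `pˢ`). -/
def PContinuousMap {X : Type*} (p : X → X → ℝ) (f : X → X) : Prop :=
  ∀ (u : ℕ → X) (x : X),
    (PConvergesTo p u x → PConvergesTo p (fun n => f (u n)) (f x)) ∧
    (PProperConvergesTo p u x → PProperConvergesTo p (fun n => f (u n)) (f x))

namespace IsPartialMetric

variable {X : Type*} {p : X → X → ℝ}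

theorem nonneg (hp : IsPartialMetric p) (x y : X) : 0 ≤ p x y := hp.1 x y

theorem self_le (hp : IsPartialMetric p) (x y : X) : p x x ≤ p x y := hp.2.2.1 x y

theorem symm (hp : IsPartialMetric p) (x y : X) : p x y = p y x := hp.2.2.2.1 x y

theorem triangle (hp : IsPartialMetric p) (x y z : X) : p x y ≤ p x z + p z y - p z z :=
  hp.2.2.2.2 x y z

theorem eq_of_eq_zero (hp : IsPartialMetric p) {x y : X} (h : p x y = 0) : x = y := by
  have hx : p x x = 0 := le_antisymm (h ▸ hp.self_le x y) (hp.nonneg x x)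
  have hy : p y y = 0 := le_antisymm (h ▸ hp.symm x y ▸ hp.self_le y x) (hp.nonneg y y)
  exact (hp.2.1 x y).2 ⟨hx.trans h.symm, h.trans hy.symm⟩

theorem le_of_tendsto (hp : IsPartialMetric p) {u : ℕ → X} {x y : X} {a b c : ℝ}
    (hx : Tendsto (fun n => p (u n) x) atTop (𝓝 a))
    (hy : Tendsto (fun n => p (u n) y) atTop (𝓝 b))
    (hu : Tendsto (fun n => p (u n) (u n)) atTop (𝓝 c)) :
    p x y ≤ a + b - c :=
  ge_of_tendsto' ((hx.add hy).sub hu) fun n => by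
    simpa only [hp.symm x (u n)] using hp.triangle x y (u n)

theorem exists_bound_of_le_sub {u : ℕ → X} {ψ : ℝ → ℝ} (hp : IsPartialMetric p)
    (hψnn : ∀ t, 0 ≤ t → 0 ≤ ψ t) (hψtop : Tendsto ψ atTop atTop)
    (hstep : ∀ n m, p (u (n + 1)) (u (m + 1)) ≤ p (u n) (u m) - ψ (p (u n) (u m))) :
    ∃ B, ∀ n m, p (u n) (u m) ≤ B := by
  set d₀ := p (u 0) (u 1)
  obtain ⟨M₀, hM₀⟩ := eventually_atTop.1 (hψtop.eventually_ge_atTop d₀)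
  set M := max M₀ (p (u 0) (u 0))
  have hfrom0 : ∀ n, p (u 0) (u n) ≤ M + d₀ := by
    intro n
    induction n with
    | zero => linarith [le_max_right M₀ (p (u 0) (u 0)), hp.nonneg (u 0) (u 1)]
    | succ n ih =>
      have hvia1 := hp.triangle (u 0) (u (n + 1)) (u 1)
      have h01 := hstep 0 n
      have h11 := hp.nonneg (u 1) (u 1)
      -- once `p(u₀, uₙ) ≥ M₀`, the step from `u₁` to `uₙ₊₁` shrinks by at least `p(u₀, u₁)`
      by_cases hsmall : p (u 0) (u n) ≤ M
      · linarith [hψnn _ (hp.nonneg (u 0) (u n))]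
      · linarith [hM₀ _ ((le_max_left _ _).trans (not_le.1 hsmall).le)]
  refine ⟨2 * (M + d₀), fun n m => ?_⟩
  linarith [hp.triangle (u n) (u m) (u 0), hp.nonneg (u 0) (u 0), hp.symm (u n) (u 0),
    hfrom0 n, hfrom0 m]

end IsPartialMetric

section Contraction

variable {d : ℕ → ℕ → ℝ} {ψ : ℝ → ℝ}

theorem tail_le_max_sub_of_le_sub (hψnn : ∀ t, 0 ≤ t → 0 ≤ ψ t)
    (hψm : MonotoneOn ψ (Set.Ici 0)) (hd : ∀ n m, 0 ≤ d n m)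
    (hstep : ∀ n m, d (n + 1) (m + 1) ≤ d n m - ψ (d n m)) {ε T : ℝ} (hε : 0 ≤ ε) {k : ℕ}
    (hT : ∀ n m, k ≤ n → k ≤ m → d n m ≤ T) :
    ∀ n m, k + 1 ≤ n → k + 1 ≤ m → d n m ≤ max ε (T - ψ ε) := by
  rintro (_ | n) (_ | m) hn hm
  · omega
  · omega
  · omega
  have hT' := hT n m (by omega) (by omega)
  have hnm := hstep n m
  rcases le_or_gt (d n m) ε with hsmall | hlarge
  · exact le_max_of_le_left (by linarith [hψnn _ (hd n m)])
  · exact le_max_of_le_right (by linarith [hψm hε (hd n m) hlarge.le])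

theorem tail_le_of_le_sub (hψnn : ∀ t, 0 ≤ t → 0 ≤ ψ t)
    (hψm : MonotoneOn ψ (Set.Ici 0)) (hd : ∀ n m, 0 ≤ d n m)
    (hstep : ∀ n m, d (n + 1) (m + 1) ≤ d n m - ψ (d n m)) {B ε : ℝ}
    (hB : ∀ n m, d n m ≤ B) (hε : 0 ≤ ε) :
    ∀ j : ℕ, ∀ n m, j ≤ n → j ≤ m → d n m ≤ max ε (B - j * ψ ε) := by
  intro j
  induction j with
  | zero => exact fun n m _ _ => by simpa using le_max_of_le_right (hB n m)
  | succ j ih =>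
    intro n m hn hm
    refine (tail_le_max_sub_of_le_sub hψnn hψm hd hstep hε ih n m hn hm).trans ?_
    have hψε := hψnn ε hε
    have hε_le := le_max_left ε (B - (j + 1 : ℕ) * ψ ε)
    have hB_le := le_max_right ε (B - (j + 1 : ℕ) * ψ ε)
    push_cast at hε_le hB_le ⊢
    refine max_le hε_le (sub_le_iff_le_add.2 (max_le ?_ ?_)) <;> linarith

theorem tendsto_zero_of_le_sub (hψnn : ∀ t, 0 ≤ t → 0 ≤ ψ t)
    (hψm : MonotoneOn ψ (Set.Ici 0)) (hψpos : ∀ t, 0 < t → 0 < ψ t)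
    (hd : ∀ n m, 0 ≤ d n m) (hstep : ∀ n m, d (n + 1) (m + 1) ≤ d n m - ψ (d n m))
    {B : ℝ} (hB : ∀ n m, d n m ≤ B) :
    Tendsto (fun nm : ℕ × ℕ => d nm.1 nm.2) atTop (𝓝 0) := by
  refine tendsto_order.2 ⟨fun a ha => Eventually.of_forall fun nm => ha.trans_le (hd _ _),
    fun a ha => ?_⟩
  have hψ := hψpos (a / 2) (half_pos ha)
  obtain ⟨j, hj⟩ := exists_nat_gt ((B - a / 2) / ψ (a / 2))
  have hjB : B - j * ψ (a / 2) ≤ a / 2 := by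
    rw [div_lt_iff₀ hψ] at hj
    linarith
  filter_upwards [eventually_ge_atTop (j, j)] with nm hnm
  calc d nm.1 nm.2 ≤ max (a / 2) (B - j * ψ (a / 2)) :=
        tail_le_of_le_sub hψnn hψm hd hstep hB (half_pos ha).le j _ _ hnm.1 hnm.2
    _ = a / 2 := max_eq_left hjB
    _ < a := half_lt_self ha

end Contraction

theorem IsPartialMetric.iterate_le_sub {X : Type*} [PartialOrder X] {p : X → X → ℝ}
    (hp : IsPartialMetric p) {f : X → X} (hf : Monotone f) {ψ : ℝ → ℝ}
    (hcontr : ∀ x y : X, y ≤ x → p (f x) (f y) ≤ p x y - ψ (p x y)) {x₀ : X} (hx₀ : x₀ ≤ f x₀)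
    (n m : ℕ) :
    p (f^[n + 1] x₀) (f^[m + 1] x₀) ≤ p (f^[n] x₀) (f^[m] x₀) - ψ (p (f^[n] x₀) (f^[m] x₀)) := by
  have hmono := hf.monotone_iterate_of_le_map hx₀
  simp only [Function.iterate_succ_apply']
  rcases le_total m n with hmn | hnm
  · exact hcontr _ _ (hmono hmn)
  · rw [hp.symm (f _), hp.symm (f^[n] x₀)]
    exact hcontr _ _ (hmono hnm)

theorem IsPartialMetric.map_eq_of_tendsto {X : Type*} {p : X → X → ℝ} (hp : IsPartialMetric p)
    {f : X → X} (hfc : PContinuousMap p f) {u : ℕ → X} {x : X} (hu : ∀ n, u (n + 1) = f (u n))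
    (hdiag : Tendsto (fun n => p (u n) (u n)) atTop (𝓝 0))
    (hx : Tendsto (fun n => p (u n) x) atTop (𝓝 0)) (hxx : p x x = 0) :
    f x = x := by
  obtain ⟨hfx, hfdiag⟩ := (hfc u x).2 ⟨hxx ▸ hx, hxx ▸ hdiag⟩
  have hdiag' : Tendsto (fun n => p (u (n + 1)) (u (n + 1))) atTop (𝓝 0) :=
    hdiag.comp (tendsto_add_atTop_nat 1)
  have hx' : Tendsto (fun n => p (u (n + 1)) x) atTop (𝓝 0) := hx.comp (tendsto_add_atTop_nat 1)
  simp only [hu] at hdiag' hx'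
  have hfxx : p (f x) (f x) = 0 := tendsto_nhds_unique hfdiag hdiag'
  rw [hfxx] at hfx
  have hle := hp.le_of_tendsto hx' hfx hdiag'
  exact (hp.eq_of_eq_zero (le_antisymm (by linarith) (hp.nonneg x (f x)))).symm

theorem fixed_point_continuous_case_general {X : Type*} [PartialOrder X] (p : X → X → ℝ)
    (hp : IsPartialMetric p) (hcomp : PComplete p)
    (f : X → X) (hf : Monotone f)
    (ψ : ℝ → ℝ) (hψm : MonotoneOn ψ (Set.Ici 0))
    (hψpos : ∀ t : ℝ, 0 < t → 0 < ψ t) (hψ0 : ψ 0 = 0)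
    (hψtop : Tendsto ψ atTop atTop)
    (hcontr : ∀ x y : X, y ≤ x → p (f x) (f y) ≤ p x y - ψ (p x y))
    (x₀ : X) (hx₀ : x₀ ≤ f x₀)
    (hfc : PContinuousMap p f) :
    ∃ u : X, f u = u ∧ p u u = 0 := by
  set u : ℕ → X := fun n => f^[n] x₀
  have hψnn : ∀ t, 0 ≤ t → 0 ≤ ψ t := fun t ht =>
    ht.eq_or_lt.elim (fun h => h ▸ hψ0.ge) fun h => (hψpos t h).le
  have hstep : ∀ n m, p (u (n + 1)) (u (m + 1)) ≤ p (u n) (u m) - ψ (p (u n) (u m)) :=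
    hp.iterate_le_sub hf hcontr hx₀
  obtain ⟨B, hB⟩ := hp.exists_bound_of_le_sub hψnn hψtop hstep
  have hcauchy := tendsto_zero_of_le_sub (d := fun n m => p (u n) (u m)) hψnn hψm hψpos
    (fun _ _ => hp.nonneg _ _) hstep hB
  obtain ⟨x, hxx, hx⟩ := hcomp u 0 hcauchy
  have hu : ∀ n, u (n + 1) = f (u n) := fun n => Function.iterate_succ_apply' f n x₀
  exact ⟨x, hp.map_eq_of_tendsto hfc hu (hcauchy.comp tendsto_atTop_diagonal) hx hxx, hxx⟩

theorem fixed_point_continuous_case {X : Type*} [PartialOrder X] (p : X → X → ℝ)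
    (hp : IsPartialMetric p) (hcomp : PComplete p)
    (f : X → X) (hf : Monotone f)
    (ψ : ℝ → ℝ) (hψc : ContinuousOn ψ (Set.Ici 0)) (hψm : MonotoneOn ψ (Set.Ici 0))
    (hψpos : ∀ t : ℝ, 0 < t → 0 < ψ t) (hψ0 : ψ 0 = 0)
    (hψtop : Tendsto ψ atTop atTop)
    (hcontr : ∀ x y : X, y ≤ x → p (f x) (f y) ≤ p x y - ψ (p x y))
    (x₀ : X) (hx₀ : x₀ ≤ f x₀)
    (hfc : PContinuousMap p f) :
    ∃ u : X, f u = u ∧ p u u = 0 :=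
  fixed_point_continuous_case_general p hp hcomp f hf ψ hψm hψpos hψ0 hψtop hcontr x₀ hx₀ hfc
end
end

section
/- Under the hypotheses of the weakly contractive fixed point theorem in ordered partial metric spaces, the Picard iterates x_n = f^n(x_0) starting from x_0 with x_0 ≤ f(x_0) satisfy lim_{n→∞} p(x_{n+1},x_n) = 0. -/
noncomputable section
open Filter Topology

/- `a` decreases to some `L ≥ 0`, and passing to the limit in the recursion gives `ψ L ≤ 0`. -/
theorem tendsto_zero_of_succ_le_sub {ψ : ℝ → ℝ} (hψc : ContinuousOn ψ (Set.Ici 0))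
    (hψpos : ∀ t : ℝ, 0 < t → 0 < ψ t) (hψ0 : ψ 0 = 0) {a : ℕ → ℝ} (ha : ∀ n, 0 ≤ a n)
    (hstep : ∀ n, a (n + 1) ≤ a n - ψ (a n)) : Tendsto a atTop (𝓝 0) := by
  have hψa : ∀ n, 0 ≤ ψ (a n) := fun n =>
    (ha n).eq_or_lt.elim (fun h => h ▸ hψ0.ge) fun h => (hψpos _ h).le
  have hanti : Antitone a := antitone_nat_of_succ_le fun n => by linarith [hstep n, hψa n]
  obtain ⟨L, hL⟩ : ∃ L, Tendsto a atTop (𝓝 L) :=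
    ⟨_, tendsto_atTop_ciInf hanti ⟨0, by rintro _ ⟨n, rfl⟩; exact ha n⟩⟩
  have hL0 : 0 ≤ L := ge_of_tendsto' hL ha
  have hψL : Tendsto (fun n => ψ (a n)) atTop (𝓝 (ψ L)) :=
    (hψc L hL0).tendsto.comp (tendsto_nhdsWithin_iff.2 ⟨hL, .of_forall ha⟩)
  have hlim : L ≤ L - ψ L :=
    le_of_tendsto_of_tendsto' (hL.comp (tendsto_add_atTop_nat 1)) (hL.sub hψL) hstep
  rcases hL0.eq_or_lt with rfl | hLpos
  · exact hL
  · linarith [hψpos L hLpos]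

theorem picard_consecutive_distance_tendsto_zero_general {X : Type*} [PartialOrder X]
    (p : X → X → ℝ) (hp : IsPartialMetric p)
    (f : X → X) (hf : Monotone f)
    (ψ : ℝ → ℝ) (hψc : ContinuousOn ψ (Set.Ici 0))
    (hψpos : ∀ t : ℝ, 0 < t → 0 < ψ t) (hψ0 : ψ 0 = 0)
    (hcontr : ∀ x y : X, y ≤ x → p (f x) (f y) ≤ p x y - ψ (p x y))
    (x₀ : X) (hx₀ : x₀ ≤ f x₀) :
    Tendsto (fun n => p (f^[n + 1] x₀) (f^[n] x₀)) atTop (𝓝 0) := by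
  refine tendsto_zero_of_succ_le_sub hψc hψpos hψ0 (fun n => hp.1 _ _) fun n => ?_
  have hchain : f^[n] x₀ ≤ f^[n + 1] x₀ := hf.monotone_iterate_of_le_map hx₀ n.le_succ
  simpa only [Function.iterate_succ_apply'] using hcontr _ _ hchain

theorem picard_consecutive_distance_tendsto_zero {X : Type*} [PartialOrder X]
    (p : X → X → ℝ) (hp : IsPartialMetric p)
    (f : X → X) (hf : Monotone f)
    (ψ : ℝ → ℝ) (hψc : ContinuousOn ψ (Set.Ici 0)) (hψm : MonotoneOn ψ (Set.Ici 0))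
    (hψpos : ∀ t : ℝ, 0 < t → 0 < ψ t) (hψ0 : ψ 0 = 0)
    (hcontr : ∀ x y : X, y ≤ x → p (f x) (f y) ≤ p x y - ψ (p x y))
    (x₀ : X) (hx₀ : x₀ ≤ f x₀) :
    Tendsto (fun n => p (f^[n + 1] x₀) (f^[n] x₀)) atTop (𝓝 0) :=
  picard_consecutive_distance_tendsto_zero_general p hp f hf ψ hψc hψpos hψ0 hcontr x₀ hx₀
end
end
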